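/- Fix indices 1 ≤ i < k ≤ n + 1, set ℓ = k − i, and assume that at least one set B ⊆ {1, ..., n} with |B| = ℓ and ∑_{j∈B} s_j ≤ C exists. Let L = {1} ∪ {j > 1 : p_j < p_{j−1}}, and for each r ∈ L for which the knapsack (r, C, ℓ) has a feasible set, let B_r be any feasible set attaining g_r(C, ℓ). Then the minimum of the reduced cost c̄_{ikB} over all batches B with |B| = ℓ and ∑_{j∈B} s_j ≤ C equals the minimum of c̄_{ikB_r} over those r ∈ L; in particular, a minimum reduced-cost batch of cardinality ℓ is one of the sets B_r with r ∈ L. -/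
import Mathlib


/-- `B` is feasible for the knapsack `(r, τ, ℓ)`:
`B ⊆ {r, …, n}`, `|B| = ℓ` and `∑_{j∈B} s j ≤ τ`. -/
def KnapFeas (n : ℕ) (s : ℕ → ℕ) (r τ ℓ : ℕ) (B : Finset ℕ) : Prop :=
  B ⊆ Finset.Icc r n ∧ B.card = ℓ ∧ ∑ j ∈ B, s j ≤ τ

/-- Reduced cost `c̄_{ikB} = (n − i + 1)·p_B − ∑_{j∈B} v j − (u i − u k)`,
where `p_B = max_{j∈B} p j`. -/
noncomputable def redCost (n : ℕ) (p : ℕ → ℕ) (v u : ℕ → ℝ) (i k : ℕ) (B : Finset ℕ) : ℝ :=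
  ((n : ℝ) - (i : ℝ) + 1) * ((B.sup p : ℕ) : ℝ) - (∑ j ∈ B, v j) - (u i - u k)

/-- `L = {1} ∪ {j > 1 : p j < p (j-1)}`. -/
def Lset (n : ℕ) (p : ℕ → ℕ) : Finset ℕ :=
  insert 1 ((Finset.Icc 2 n).filter fun j => p j < p (j - 1))

lemma Lset_one_le {n : ℕ} {p : ℕ → ℕ} {r : ℕ} (h : r ∈ Lset n p) : 1 ≤ r := by
  rcases Finset.mem_insert.mp h with h | h
  · omega
  · have := (Finset.mem_Icc.mp (Finset.mem_filter.mp h).1).1; omega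

lemma pmono {n : ℕ} {p : ℕ → ℕ} (hp : ∀ j, 1 ≤ j → j < n → p (j + 1) ≤ p j)
    {a b : ℕ} (ha : 1 ≤ a) (hab : a ≤ b) : b ≤ n → p b ≤ p a := by
  induction b, hab using Nat.le_induction with
  | base => intro _; exact le_refl _
  | succ b hb' ih =>
    intro h
    exact (hp b (ha.trans hb') (by omega)).trans (ih (by omega))

lemma plateau {n : ℕ} {p : ℕ → ℕ} (hp : ∀ j, 1 ≤ j → j < n → p (j + 1) ≤ p j)
    {m : ℕ} (hm1 : 1 ≤ m) : m ≤ n → ∃ r ∈ Lset n p, r ≤ m ∧ p r = p m := by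
  induction m, hm1 using Nat.le_induction with
  | base => intro _; exact ⟨1, Finset.mem_insert_self _ _, le_refl _, rfl⟩
  | succ m hm ih =>
    intro hmn
    by_cases h : p (m + 1) < p m
    · refine ⟨m + 1, ?_, le_refl _, rfl⟩
      exact Finset.mem_insert_of_mem (Finset.mem_filter.mpr
        ⟨Finset.mem_Icc.mpr ⟨by omega, hmn⟩, by simpa using h⟩)
    · have heq : p (m + 1) = p m := le_antisymm (hp m hm (by omega)) (not_lt.mp h)
      obtain ⟨r, hrL, hrm, hpr⟩ := ih (by omega)
      exact ⟨r, hrL, by omega, by rw [hpr, heq]⟩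

/-- With jobs in LPT order, indices `1 ≤ i < k ≤ n+1`, `ℓ = k − i`,
assuming some feasible batch of cardinality `ℓ` exists, and `Br r` any feasible set
attaining `g_r(C, ℓ)` for each `r ∈ L` whose knapsack is feasible: the minimum reduced
cost over all feasible batches `B` of cardinality `ℓ` equals the minimum of the reduced
costs of the sets `Br r`, `r ∈ L`; in particular a minimum reduced-cost batch is one of
the `Br r` with `r ∈ L`. -/
theorem stmt2 (n : ℕ) (p s : ℕ → ℕ) (v u : ℕ → ℝ) (Cap : ℕ)
    (i k : ℕ) (hi : 1 ≤ i) (hik : i < k) (hk : k ≤ n + 1)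
    (hp : ∀ j, 1 ≤ j → j < n → p (j + 1) ≤ p j)
    (hex : ∃ B : Finset ℕ, KnapFeas n s 1 Cap (k - i) B)
    (Br : ℕ → Finset ℕ)
    (hBr : ∀ r ∈ Lset n p, (∃ B, KnapFeas n s r Cap (k - i) B) →
      KnapFeas n s r Cap (k - i) (Br r) ∧
        ∀ B, KnapFeas n s r Cap (k - i) B → ∑ j ∈ B, v j ≤ ∑ j ∈ Br r, v j) :
    sInf {x : ℝ | ∃ B, KnapFeas n s 1 Cap (k - i) B ∧ x = redCost n p v u i k B} =
      sInf {x : ℝ | ∃ r ∈ Lset n p, (∃ B, KnapFeas n s r Cap (k - i) B) ∧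
        x = redCost n p v u i k (Br r)} ∧
    ∃ r ∈ Lset n p, (∃ B, KnapFeas n s r Cap (k - i) B) ∧
      ∀ B, KnapFeas n s 1 Cap (k - i) B →
        redCost n p v u i k (Br r) ≤ redCost n p v u i k B := by
  classical
  have key : ∀ B, KnapFeas n s 1 Cap (k - i) B → ∃ r ∈ Lset n p,
      (∃ B', KnapFeas n s r Cap (k - i) B') ∧
      redCost n p v u i k (Br r) ≤ redCost n p v u i k B := by
    intro B hB
    obtain ⟨hBsub, hBcard, hBsum⟩ := hB
    have hne : B.Nonempty := Finset.card_pos.mp (by omega)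
    set m := B.min' hne with hm
    have hmB : m ∈ B := B.min'_mem hne
    have hmIcc := Finset.mem_Icc.mp (hBsub hmB)
    obtain ⟨r, hrL, hrm, hpr⟩ := plateau hp hmIcc.1 hmIcc.2
    have hr1 : 1 ≤ r := Lset_one_le hrL
    have hBr' : KnapFeas n s r Cap (k - i) B := by
      refine ⟨fun j hj => ?_, hBcard, hBsum⟩
      have hj' := Finset.mem_Icc.mp (hBsub hj)
      exact Finset.mem_Icc.mpr ⟨hrm.trans (B.min'_le j hj), hj'.2⟩
    obtain ⟨⟨hsub', _, _⟩, hopt⟩ := hBr r hrL ⟨B, hBr'⟩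
    refine ⟨r, hrL, ⟨B, hBr'⟩, ?_⟩
    have hsupBr : (Br r).sup p ≤ p r := Finset.sup_le fun j hj => by
      have hj' := Finset.mem_Icc.mp (hsub' hj)
      exact pmono hp hr1 hj'.1 hj'.2
    have hsupB : p r ≤ B.sup p := hpr ▸ Finset.le_sup hmB
    have hsup : (Br r).sup p ≤ B.sup p := hsupBr.trans hsupB
    have hcoef : (0 : ℝ) ≤ (n : ℝ) - i + 1 := by
      have : (i : ℝ) ≤ n := Nat.cast_le.mpr (by omega)
      linarith
    have h1 : ((n : ℝ) - i + 1) * (((Br r).sup p : ℕ) : ℝ) ≤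
        ((n : ℝ) - i + 1) * ((B.sup p : ℕ) : ℝ) :=
      mul_le_mul_of_nonneg_left (Nat.cast_le.mpr hsup) hcoef
    have h2 := hopt B hBr'
    unfold redCost
    linarith
  set T := (Lset n p).filter (fun r => ∃ B, KnapFeas n s r Cap (k - i) B) with hT
  obtain ⟨B₀, hB₀⟩ := hex
  obtain ⟨r₀, hr₀L, hr₀f, _⟩ := key B₀ hB₀
  have hTne : T.Nonempty := ⟨r₀, Finset.mem_filter.mpr ⟨hr₀L, hr₀f⟩⟩
  obtain ⟨rs, hrsT, hmin⟩ := T.exists_min_image (fun r => redCost n p v u i k (Br r)) hTne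
  obtain ⟨hrsL, hrsF⟩ := Finset.mem_filter.mp hrsT
  have hrs1 : 1 ≤ rs := Lset_one_le hrsL
  have hmain : ∀ B, KnapFeas n s 1 Cap (k - i) B →
      redCost n p v u i k (Br rs) ≤ redCost n p v u i k B := by
    intro B hB
    obtain ⟨r, hrL, hrF, hle⟩ := key B hB
    exact (hmin r (Finset.mem_filter.mpr ⟨hrL, hrF⟩)).trans hle
  refine ⟨?_, rs, hrsL, hrsF, hmain⟩
  obtain ⟨hsub, hcard, hsum⟩ := (hBr rs hrsL hrsF).1
  have hfeas1 : KnapFeas n s 1 Cap (k - i) (Br rs) :=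
    ⟨hsub.trans (Finset.Icc_subset_Icc_left hrs1), hcard, hsum⟩
  have hL1 : IsLeast {x : ℝ | ∃ B, KnapFeas n s 1 Cap (k - i) B ∧
      x = redCost n p v u i k B} (redCost n p v u i k (Br rs)) := by
    constructor
    · exact ⟨Br rs, hfeas1, rfl⟩
    · rintro x ⟨B, hB, rfl⟩
      exact hmain B hB
  have hL2 : IsLeast {x : ℝ | ∃ r ∈ Lset n p, (∃ B, KnapFeas n s r Cap (k - i) B) ∧
      x = redCost n p v u i k (Br r)} (redCost n p v u i k (Br rs)) := by
    constructor
    · exact ⟨rs, hrsL, hrsF, rfl⟩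
    · rintro x ⟨r, hrL, hrF, rfl⟩
      exact hmin r (Finset.mem_filter.mpr ⟨hrL, hrF⟩)
  rw [hL1.csInf_eq, hL2.csInf_eq]
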